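/- arXiv:1905.07865 — 5 statements merged into one kernel-verified Lean document; each statement's English description precedes it below -/
import Mathlib

section
/- For matrices B₁ ∈ ℝ^{n×n} and B₂ ∈ ℝ^{n×k}, the two-to-infinity norm satisfies ‖B₁B₂‖_{2,∞} ≤ ‖B₁‖_∞ ‖B₂‖_{2,∞}, where ‖B₁‖_∞ is the maximum absolute row sum of B₁. -/
open Matrix

noncomputable def rnorm {k : ℕ} (v : Fin k → ℝ) : ℝ := Real.sqrt (∑ j, v j ^ 2)

/-- two-to-infinity norm: maximum Euclidean norm of the rows -/
noncomputable def twoInf {n k : ℕ} (B : Matrix (Fin n) (Fin k) ℝ) : ℝ := ⨆ i, rnorm (B i)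

/-- Frobenius norm -/
noncomputable def frob {n k : ℕ} (B : Matrix (Fin n) (Fin k) ℝ) : ℝ :=
  Real.sqrt (∑ i, ∑ j, B i j ^ 2)

/-- maximum absolute row-sum norm -/
noncomputable def rowSumNorm {n k : ℕ} (B : Matrix (Fin n) (Fin k) ℝ) : ℝ := ⨆ i, ∑ j, |B i j|

/-- spectral norm: operator norm induced by Euclidean vector norms -/
noncomputable def specNorm {m n : ℕ} (B : Matrix (Fin m) (Fin n) ℝ) : ℝ :=
  ‖(Matrix.toEuclideanLin B).toContinuousLinearMap‖

/-- vector sup norm -/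
noncomputable def vecInf {n : ℕ} (v : Fin n → ℝ) : ℝ := ⨆ i, |v i|

/-- smallest singular value, via σ_min(B) = inf over unit v of ‖vᵀB‖₂ -/
noncomputable def sigmaMin {l : ℕ} (B : Matrix (Fin l) (Fin l) ℝ) : ℝ :=
  ⨅ v : {v : Fin l → ℝ // rnorm v = 1}, rnorm (Matrix.vecMul v.1 B)

lemma rnorm_eq_norm_toLp {k : ℕ} (v : Fin k → ℝ) : rnorm v = ‖WithLp.toLp 2 v‖ := by
  simp [rnorm, EuclideanSpace.norm_eq, sq_abs]

lemma rnorm_vecMul_le {m k : ℕ} (c : Fin m → ℝ) (B : Matrix (Fin m) (Fin k) ℝ) :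
    rnorm (c ᵥ* B) ≤ ∑ l, |c l| * rnorm (B l) := by
  simp only [rnorm_eq_norm_toLp, vecMul_eq_sum, WithLp.toLp_sum, WithLp.toLp_smul]
  refine (norm_sum_le _ _).trans_eq ?_
  simp only [norm_smul, Real.norm_eq_abs]

section

variable {n k : ℕ} (B : Matrix (Fin n) (Fin k) ℝ)

lemma rnorm_row_le_twoInf (i : Fin n) : rnorm (B i) ≤ twoInf B :=
  le_ciSup (Set.finite_range fun i => rnorm (B i)).bddAbove i

lemma twoInf_nonneg : 0 ≤ twoInf B :=
  Real.iSup_nonneg fun _ => Real.sqrt_nonneg _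

lemma abs_row_sum_le_rowSumNorm (i : Fin n) : ∑ j, |B i j| ≤ rowSumNorm B :=
  le_ciSup (Set.finite_range fun i => ∑ j, |B i j|).bddAbove i

lemma rowSumNorm_nonneg : 0 ≤ rowSumNorm B :=
  Real.iSup_nonneg fun _ => Finset.sum_nonneg fun _ _ => abs_nonneg _

end

lemma rnorm_vecMul_le_mul_twoInf {m k : ℕ} (c : Fin m → ℝ) (B : Matrix (Fin m) (Fin k) ℝ) :
    rnorm (c ᵥ* B) ≤ (∑ l, |c l|) * twoInf B :=
  calc rnorm (c ᵥ* B) ≤ ∑ l, |c l| * rnorm (B l) := rnorm_vecMul_le c B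
    _ ≤ ∑ l, |c l| * twoInf B := by
        gcongr with l
        exact rnorm_row_le_twoInf B l
    _ = (∑ l, |c l|) * twoInf B := (Finset.sum_mul ..).symm

theorem stmt2 {n k : ℕ} (B₁ : Matrix (Fin n) (Fin n) ℝ) (B₂ : Matrix (Fin n) (Fin k) ℝ) :
    twoInf (B₁ * B₂) ≤ rowSumNorm B₁ * twoInf B₂ := by
  refine Real.iSup_le (fun i => ?_) (mul_nonneg (rowSumNorm_nonneg B₁) (twoInf_nonneg B₂))
  rw [mul_apply_eq_vecMul]
  exact (rnorm_vecMul_le_mul_twoInf (B₁ i) B₂).trans <|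
    mul_le_mul_of_nonneg_right (abs_row_sum_le_rowSumNorm B₁ i) (twoInf_nonneg B₂)
end

section
/- Let D₁ ∈ ℝ^{ℓ×ℓ} and D₂ ∈ ℝ^{m×m} be diagonal matrices with λ_min(D₁) ≥ λ_max(D₂). Then sep_2(D₁, D₂) := inf{‖ZD₁ − D₂Z‖_2 : Z ∈ ℝ^{m×ℓ}, ‖Z‖_2 = 1} equals λ_min(D₁) − λ_max(D₂), where ‖·‖_2 is the spectral norm. -/
/-!
Write `a = min_i D₁ i i` and `b = max_j D₂ j j`. For a unit vector `v` at which `Z` attains its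
norm, `Zᵀ Z v = ‖Z‖² v`; pairing `(Z D₁ - D₂ Z) v` with `Z v` therefore gives
`‖Z‖² ⟪D₁ v, v⟫ - ⟪D₂ Z v, Z v⟫ ≥ (a - b) ‖Z‖²`, while Cauchy–Schwarz bounds the same pairing by
`‖Z D₁ - D₂ Z‖ ‖Z‖`. The bound is attained by the matrix unit `E_{j₀ i₀}` at a pair of extremal
indices, since `E_{j₀ i₀} D₁ - D₂ E_{j₀ i₀} = (D₁ i₀ i₀ - D₂ j₀ j₀) E_{j₀ i₀}`.
-/

open Matrix

open scoped RealInnerProductSpace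

namespace ContinuousLinearMap

variable {E F : Type*} [NormedAddCommGroup E] [InnerProductSpace ℝ E]
  [NormedAddCommGroup F] [InnerProductSpace ℝ F]

theorem exists_norm_eq_one_norm_apply_eq_opNorm [FiniteDimensional ℝ E] [Nontrivial E]
    (T : E →L[ℝ] F) : ∃ v, ‖v‖ = 1 ∧ ‖T v‖ = ‖T‖ := by
  obtain ⟨v, hv, hvT⟩ := ((isCompact_sphere (0 : E) 1).image
    (by fun_prop : Continuous fun x => ‖T x‖)).sSup_mem
    ((NormedSpace.sphere_nonempty.mpr zero_le_one).image _)
  exact ⟨v, mem_sphere_zero_iff_norm.mp hv, hvT.trans T.sSup_sphere_eq_norm⟩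

theorem adjoint_apply_apply_of_norm_apply_eq_opNorm [CompleteSpace E] [CompleteSpace F]
    (T : E →L[ℝ] F) {v : E} (hv : ‖v‖ = 1) (hTv : ‖T v‖ = ‖T‖) :
    adjoint T (T v) = ‖T‖ ^ 2 • v := by
  set w := adjoint T (T v)
  have hwv : ⟪w, v⟫ = ‖T‖ ^ 2 := by
    rw [adjoint_inner_left, real_inner_self_eq_norm_sq, hTv]
  have hw : ‖w‖ ≤ ‖T‖ ^ 2 := by
    calc ‖w‖ ≤ ‖adjoint T‖ * ‖T v‖ := le_opNorm _ _
      _ = ‖T‖ ^ 2 := by rw [LinearIsometryEquiv.norm_map, hTv, sq]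
  -- equality in Cauchy–Schwarz forces `w` onto the line through `v`
  have : ‖w - ‖T‖ ^ 2 • v‖ ^ 2 ≤ 0 := by
    rw [norm_sub_sq_real, real_inner_smul_right, norm_smul, hwv, hv,
      Real.norm_of_nonneg (by positivity)]
    nlinarith [norm_nonneg w]
  rw [← sub_eq_zero, ← norm_eq_zero]
  exact pow_eq_zero_iff two_ne_zero |>.mp (le_antisymm this (sq_nonneg _))

theorem sub_mul_opNorm_le_opNorm_comp_sub_comp [FiniteDimensional ℝ E] [FiniteDimensional ℝ F]
    (Z : E →L[ℝ] F) (A : E →L[ℝ] E) (B : F →L[ℝ] F) {a b : ℝ}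
    (hA : ∀ x, a * ‖x‖ ^ 2 ≤ ⟪A x, x⟫) (hB : ∀ y, ⟪B y, y⟫ ≤ b * ‖y‖ ^ 2) :
    (a - b) * ‖Z‖ ≤ ‖Z ∘L A - B ∘L Z‖ := by
  rcases (norm_nonneg Z).eq_or_lt with hZ | hZ
  · rw [← hZ, mul_zero]; exact norm_nonneg _
  have : Nontrivial E := by
    obtain ⟨x, hx⟩ : ∃ x, Z x ≠ 0 := by
      by_contra! h
      exact norm_pos_iff.mp hZ (ext h)
    exact nontrivial_of_ne x 0 (by rintro rfl; simp at hx)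
  obtain ⟨v, hv, hZv⟩ := Z.exists_norm_eq_one_norm_apply_eq_opNorm
  have hAv : ⟪Z (A v), Z v⟫ = ‖Z‖ ^ 2 * ⟪A v, v⟫ := by
    rw [← adjoint_inner_right, Z.adjoint_apply_apply_of_norm_apply_eq_opNorm hv hZv,
      real_inner_smul_right]
  have hAv' := hA v
  have hBv := hB (Z v)
  rw [hv] at hAv'
  rw [hZv] at hBv
  have : (a - b) * ‖Z‖ * ‖Z‖ ≤ ‖Z ∘L A - B ∘L Z‖ * ‖Z‖ := by
    calc (a - b) * ‖Z‖ * ‖Z‖ ≤ ‖Z‖ ^ 2 * ⟪A v, v⟫ - ⟪B (Z v), Z v⟫ := by nlinarith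
      _ = ⟪(Z ∘L A - B ∘L Z) v, Z v⟫ := by
        rw [_root_.sub_apply, comp_apply, comp_apply, inner_sub_left, hAv]
      _ ≤ ‖(Z ∘L A - B ∘L Z) v‖ * ‖Z v‖ := real_inner_le_norm _ _
      _ ≤ ‖Z ∘L A - B ∘L Z‖ * ‖Z‖ := by
        rw [hZv]; gcongr; simpa [hv] using (Z ∘L A - B ∘L Z).le_opNorm v
  exact le_of_mul_le_mul_right this hZ

end ContinuousLinearMap

section L2

open scoped Matrix.Norms.L2Operator

theorem specNorm_eq_norm {m n : ℕ} (A : Matrix (Fin m) (Fin n) ℝ) : specNorm A = ‖A‖ := rfl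

theorem specNorm_smul {m n : ℕ} (c : ℝ) (A : Matrix (Fin m) (Fin n) ℝ) :
    specNorm (c • A) = |c| * specNorm A := by
  simp only [specNorm_eq_norm, norm_smul, Real.norm_eq_abs]

theorem specNorm_single_one {m n : ℕ} (i : Fin m) (j : Fin n) :
    specNorm (single i j (1 : ℝ)) = 1 := by
  have h : ‖single i j (1 : ℝ)‖ * ‖single i j (1 : ℝ)‖ = 1 := by
    rw [← l2_opNorm_conjTranspose_mul_self, conjTranspose_single, single_mul_single_same,
      star_one, mul_one, ← diagonal_single, l2_opNorm_diagonal, Pi.norm_single, norm_one]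
  rw [specNorm_eq_norm]
  nlinarith [norm_nonneg (single i j (1 : ℝ))]

end L2

theorem toContinuousLinearMap_toEuclideanLin_mul {m n k : Type*} [Fintype m] [Fintype n]
    [Fintype k] [DecidableEq n] [DecidableEq k] (A : Matrix m n ℝ) (B : Matrix n k ℝ) :
    (toEuclideanLin (A * B)).toContinuousLinearMap =
      (toEuclideanLin A).toContinuousLinearMap ∘L (toEuclideanLin B).toContinuousLinearMap := by
  ext x
  simp [mulVec_mulVec]

namespace Matrix.IsDiag

variable {n : Type*} [Fintype n] [DecidableEq n] {D : Matrix n n ℝ}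

theorem inner_toEuclideanLin_self (hD : D.IsDiag) (x : EuclideanSpace ℝ n) :
    ⟪toEuclideanLin D x, x⟫ = ∑ i, D i i * x i ^ 2 := by
  rw [← hD.diagonal_diag]
  simp [PiLp.inner_apply, mulVec_diagonal, sq, mul_left_comm]

theorem iInf_mul_norm_sq_le_inner (hD : D.IsDiag) (x : EuclideanSpace ℝ n) :
    (⨅ i, D i i) * ‖x‖ ^ 2 ≤ ⟪toEuclideanLin D x, x⟫ := by
  rw [hD.inner_toEuclideanLin_self, EuclideanSpace.real_norm_sq_eq, Finset.mul_sum]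
  gcongr with i
  exact ciInf_le (Set.finite_range _).bddBelow i

theorem inner_le_iSup_mul_norm_sq (hD : D.IsDiag) (x : EuclideanSpace ℝ n) :
    ⟪toEuclideanLin D x, x⟫ ≤ (⨆ i, D i i) * ‖x‖ ^ 2 := by
  rw [hD.inner_toEuclideanLin_self, EuclideanSpace.real_norm_sq_eq, Finset.mul_sum]
  gcongr with i
  exact le_ciSup (f := fun i => D i i) (Set.finite_range _).bddAbove i

end Matrix.IsDiag

theorem single_one_mul_sub_mul_single_one {m n : Type*} [Fintype m] [Fintype n] [DecidableEq m]
    [DecidableEq n] {D₁ : Matrix n n ℝ} {D₂ : Matrix m m ℝ} (hD₁ : D₁.IsDiag) (hD₂ : D₂.IsDiag)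
    (i : m) (j : n) :
    single i j (1 : ℝ) * D₁ - D₂ * single i j (1 : ℝ) = (D₁ j j - D₂ i i) • single i j 1 := by
  obtain ⟨d₁, rfl⟩ : ∃ d, diagonal d = D₁ := ⟨_, hD₁.diagonal_diag⟩
  obtain ⟨d₂, rfl⟩ : ∃ d, diagonal d = D₂ := ⟨_, hD₂.diagonal_diag⟩
  ext a b
  simp only [Matrix.sub_apply, mul_diagonal, diagonal_mul, Matrix.smul_apply, single_apply,
    smul_eq_mul]
  split_ifs with h
  · obtain ⟨rfl, rfl⟩ := h; simp
  · simp

theorem sub_mul_specNorm_le_specNorm_mul_sub_mul {l m : ℕ} {D₁ : Matrix (Fin l) (Fin l) ℝ}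
    {D₂ : Matrix (Fin m) (Fin m) ℝ} (hD₁ : D₁.IsDiag) (hD₂ : D₂.IsDiag)
    (Z : Matrix (Fin m) (Fin l) ℝ) :
    ((⨅ i, D₁ i i) - ⨆ j, D₂ j j) * specNorm Z ≤ specNorm (Z * D₁ - D₂ * Z) := by
  simp only [specNorm, map_sub, toContinuousLinearMap_toEuclideanLin_mul]
  exact ContinuousLinearMap.sub_mul_opNorm_le_opNorm_comp_sub_comp _ _ _
    hD₁.iInf_mul_norm_sq_le_inner hD₂.inner_le_iSup_mul_norm_sq

theorem stmt6 {l m : ℕ} [NeZero l] [NeZero m]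
    (D₁ : Matrix (Fin l) (Fin l) ℝ) (D₂ : Matrix (Fin m) (Fin m) ℝ)
    (hD₁ : D₁.IsDiag) (hD₂ : D₂.IsDiag)
    (hgap : (⨆ j, D₂ j j) ≤ ⨅ i, D₁ i i) :
    sInf {r : ℝ | ∃ Z : Matrix (Fin m) (Fin l) ℝ, specNorm Z = 1 ∧ r = specNorm (Z * D₁ - D₂ * Z)} =
      (⨅ i, D₁ i i) - (⨆ j, D₂ j j) := by
  obtain ⟨i₀, hi₀⟩ := exists_eq_ciInf_of_finite (f := fun i : Fin l => D₁ i i)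
  obtain ⟨j₀, hj₀⟩ := exists_eq_ciSup_of_finite (f := fun j : Fin m => D₂ j j)
  refine IsLeast.csInf_eq ⟨⟨single j₀ i₀ 1, specNorm_single_one j₀ i₀, ?_⟩, ?_⟩
  · rw [single_one_mul_sub_mul_single_one hD₁ hD₂, specNorm_smul, specNorm_single_one, mul_one,
      hi₀, hj₀, abs_of_nonneg (sub_nonneg.mpr hgap)]
  · rintro _ ⟨Z, hZ, rfl⟩
    simpa [hZ] using sub_mul_specNorm_le_specNorm_mul_sub_mul hD₁ hD₂ Z
end

section
/- Let D₁ ∈ ℝ^{ℓ×ℓ} and D₂ ∈ ℝ^{m×m} be diagonal matrices with λ_min(D₁) ≥ λ_max(D₂). Then sep_{2,∞}(D₁, D₂) := inf{‖ZD₁ − D₂Z‖_{2,∞} : Z ∈ ℝ^{m×ℓ}, ‖Z‖_{2,∞} = 1} equals λ_min(D₁) − λ_max(D₂). -/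
open Matrix

/-! For diagonal `D₁`, `D₂` the map `Z ↦ Z D₁ - D₂ Z` scales the entry `Z i j` by
`D₁ j j - D₂ i i`, which is at least the gap `λ_min(D₁) - λ_max(D₂) ≥ 0`; hence every row norm,
and so the `(2,∞)`-norm, is scaled by at least the gap. The matrix unit at the position of
`λ_max(D₂)` and `λ_min(D₁)` attains it. -/

lemma Matrix.IsDiag.mul_sub_mul_apply {α m n : Type*} [CommRing α] [Fintype m] [Fintype n]
    [DecidableEq m] [DecidableEq n] {A : Matrix n n α} {B : Matrix m m α} (hA : A.IsDiag)
    (hB : B.IsDiag) (Z : Matrix m n α) (i : m) (j : n) :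
    (Z * A - B * Z) i j = (A j j - B i i) * Z i j := by
  rw [← hA.diagonal_diag, ← hB.diagonal_diag]
  simp only [sub_apply, mul_diagonal, diagonal_mul, diag_apply, diagonal_apply_eq]
  ring

lemma Matrix.IsDiag.single_mul_sub_mul_single {α m n : Type*} [CommRing α] [Fintype m]
    [Fintype n] [DecidableEq m] [DecidableEq n] {A : Matrix n n α} {B : Matrix m m α}
    (hA : A.IsDiag) (hB : B.IsDiag) (i : m) (j : n) (c : α) :
    single i j c * A - B * single i j c = single i j ((A j j - B i i) * c) := by
  ext i' j'
  rw [hA.mul_sub_mul_apply hB]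
  by_cases h : i = i' ∧ j = j'
  · obtain ⟨rfl, rfl⟩ := h
    simp
  · simp only [single_apply_of_ne _ _ _ _ _ h, mul_zero]

lemma rnorm_eq_abs_of_eq_zero_of_ne {k : ℕ} {v : Fin k → ℝ} {j : Fin k}
    (hv : ∀ q ≠ j, v q = 0) : rnorm v = |v j| := by
  rw [rnorm, Finset.sum_eq_single j (fun q _ hq => by rw [hv q hq]; ring) (by simp),
    Real.sqrt_sq_eq_abs]

lemma mul_rnorm_le_rnorm {k : ℕ} {c : ℝ} (hc : 0 ≤ c) {v w : Fin k → ℝ}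
    (h : ∀ j, c * |v j| ≤ |w j|) : c * rnorm v ≤ rnorm w := by
  have hsq : ∀ j, (c * v j) ^ 2 ≤ w j ^ 2 := fun j => by
    rw [← sq_abs, abs_mul, abs_of_nonneg hc, ← sq_abs (w j)]
    exact pow_le_pow_left₀ (by positivity) (h j) 2
  calc c * rnorm v = Real.sqrt (∑ j, (c * v j) ^ 2) := by
        simp_rw [rnorm, mul_pow, ← Finset.mul_sum, Real.sqrt_mul (sq_nonneg c), Real.sqrt_sq hc]
    _ ≤ rnorm w := Real.sqrt_le_sqrt (Finset.sum_le_sum fun j _ => hsq j)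

lemma mul_twoInf_le_twoInf {n k : ℕ} {c : ℝ} (hc : 0 ≤ c) {Z W : Matrix (Fin n) (Fin k) ℝ}
    (h : ∀ i j, c * |Z i j| ≤ |W i j|) : c * twoInf Z ≤ twoInf W := by
  rw [twoInf, Real.mul_iSup_of_nonneg hc]
  exact ciSup_mono (Set.finite_range _).bddAbove fun i => mul_rnorm_le_rnorm hc (h i)

lemma twoInf_single {n k : ℕ} (i : Fin n) (j : Fin k) (c : ℝ) :
    twoInf (single i j c) = |c| := by
  have hrow : ∀ p, rnorm (single i j c p) = if p = i then |c| else 0 := fun p => by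
    rw [rnorm_eq_abs_of_eq_zero_of_ne (j := j) fun q hq => single_apply_of_col_ne _ _ hq.symm _]
    by_cases hp : p = i
    · simp [hp]
    · simp [hp, single_apply_of_row_ne (Ne.symm hp)]
  have : Nonempty (Fin n) := ⟨i⟩
  refine le_antisymm (ciSup_le fun p => ?_) ?_
  · rw [hrow]; split_ifs <;> simp
  · calc |c| = rnorm (single i j c i) := by simp [hrow]
      _ ≤ twoInf (single i j c) :=
        le_ciSup (f := fun p => rnorm (single i j c p)) (Set.finite_range _).bddAbove i

theorem stmt7 {l m : ℕ} [NeZero l] [NeZero m]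
    (D₁ : Matrix (Fin l) (Fin l) ℝ) (D₂ : Matrix (Fin m) (Fin m) ℝ)
    (hD₁ : D₁.IsDiag) (hD₂ : D₂.IsDiag)
    (hgap : (⨆ j, D₂ j j) ≤ ⨅ i, D₁ i i) :
    sInf {r : ℝ | ∃ Z : Matrix (Fin m) (Fin l) ℝ, twoInf Z = 1 ∧ r = twoInf (Z * D₁ - D₂ * Z)} =
      (⨅ i, D₁ i i) - (⨆ j, D₂ j j) := by
  set a := ⨅ i, D₁ i i
  set b := ⨆ j, D₂ j j
  have hab : 0 ≤ a - b := sub_nonneg.mpr hgap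
  obtain ⟨j₀, hj₀⟩ := exists_eq_ciInf_of_finite (f := fun i => D₁ i i)
  obtain ⟨i₀, hi₀⟩ := exists_eq_ciSup_of_finite (f := fun j => D₂ j j)
  refine IsLeast.csInf_eq ⟨⟨single i₀ j₀ 1, by simp [twoInf_single], ?_⟩, ?_⟩
  · rw [hD₁.single_mul_sub_mul_single hD₂, hj₀, hi₀, mul_one, twoInf_single, abs_of_nonneg hab]
  · rintro r ⟨Z, hZ, rfl⟩
    have hab_le : ∀ i j, a - b ≤ D₁ j j - D₂ i i := fun i j =>
      sub_le_sub (ciInf_le (Set.finite_range _).bddBelow j)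
        (le_ciSup (f := fun j => D₂ j j) (Set.finite_range _).bddAbove i)
    have := mul_twoInf_le_twoInf hab (W := Z * D₁ - D₂ * Z) fun i j => by
      rw [hD₁.mul_sub_mul_apply hD₂, abs_mul]
      exact mul_le_mul_of_nonneg_right ((hab_le i j).trans (le_abs_self _)) (abs_nonneg _)
    rwa [hZ, mul_one] at this
end

section
/- Let B ∈ ℝ^{ℓ×ℓ}, C ∈ ℝ^{m×m}, and W ∈ ℝ^{n×m} with orthonormal columns (n ≥ m). Then sep_{(2,∞),W}(B, WCW^T) ≥ (1/√n) sep_F(B, C), where sep_{(2,∞),W}(B, M) := inf{‖ZB − MZ‖_{2,∞} : Z = WX, X ∈ ℝ^{m×ℓ}, ‖Z‖_{2,∞} = 1} and sep_F(B, C) := inf{‖XB − CX‖_F : ‖X‖_F = 1}. -/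
open Matrix

/-!
Since `W` has orthonormal columns, `W * C * Wᵀ * (W * X) = W * (C * X)`, so the residual of `Z = W * X`
is `W * (X * B - C * X)`, and multiplying by `W` preserves Frobenius norms. Hence for
`‖W * X‖_{2,∞} = 1` we get `‖X‖_F = ‖W * X‖_F ≥ 1` and, by homogeneity of the residual,
`sep_F(B, C) ≤ sep_F(B, C) ‖X‖_F ≤ ‖X * B - C * X‖_F = ‖W * (X * B - C * X)‖_F ≤ √n ‖W * (X * B - C * X)‖_{2,∞}`.
Since `sInf ∅ = 0`, one also needs that the right-hand infimum ranges over a nonempty set whenever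
the left-hand one does: rescale a Frobenius-unit `X`, for which `W * X ≠ 0`.
-/

noncomputable def sepF {l m : ℕ} (B : Matrix (Fin l) (Fin l) ℝ) (C : Matrix (Fin m) (Fin m) ℝ) : ℝ :=
  sInf {r : ℝ | ∃ X : Matrix (Fin m) (Fin l) ℝ, frob X = 1 ∧ r = frob (X * B - C * X)}

noncomputable def sepTwoInfOn {l m n : ℕ} (W : Matrix (Fin n) (Fin m) ℝ)
    (B : Matrix (Fin l) (Fin l) ℝ) (M : Matrix (Fin n) (Fin n) ℝ) : ℝ :=
  sInf {r : ℝ | ∃ X : Matrix (Fin m) (Fin l) ℝ, twoInf (W * X) = 1 ∧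
    r = twoInf (W * X * B - M * (W * X))}

lemma rnorm_nonneg {k : ℕ} (v : Fin k → ℝ) : 0 ≤ rnorm v := Real.sqrt_nonneg _

lemma rnorm_sq {k : ℕ} (v : Fin k → ℝ) : rnorm v ^ 2 = ∑ j, v j ^ 2 :=
  Real.sq_sqrt (Finset.sum_nonneg fun _ _ => sq_nonneg _)

lemma rnorm_smul {k : ℕ} (c : ℝ) (v : Fin k → ℝ) : rnorm (c • v) = |c| * rnorm v := by
  rw [rnorm, rnorm, ← Real.sqrt_sq_eq_abs, ← Real.sqrt_mul (sq_nonneg c), Finset.mul_sum]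
  simp only [Pi.smul_apply, smul_eq_mul, mul_pow]

section Frobenius

variable {n k : ℕ}

lemma frob_nonneg (A : Matrix (Fin n) (Fin k) ℝ) : 0 ≤ frob A := Real.sqrt_nonneg _

lemma frob_eq_sqrt_trace (A : Matrix (Fin n) (Fin k) ℝ) : frob A = √(trace (Aᵀ * A)) := by
  rw [frob, Finset.sum_comm]
  simp only [trace, diag, mul_apply, transpose_apply, sq]

lemma frob_smul (c : ℝ) (A : Matrix (Fin n) (Fin k) ℝ) : frob (c • A) = |c| * frob A := by
  rw [frob_eq_sqrt_trace, frob_eq_sqrt_trace, transpose_smul, Matrix.smul_mul, Matrix.mul_smul, smul_smul, trace_smul,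
    smul_eq_mul, Real.sqrt_mul (mul_self_nonneg c), Real.sqrt_mul_self_eq_abs]

lemma frob_mul_of_transpose_mul_self_eq_one {m : ℕ} {W : Matrix (Fin n) (Fin m) ℝ}
    (hW : Wᵀ * W = 1) (A : Matrix (Fin m) (Fin k) ℝ) : frob (W * A) = frob A := by
  rw [frob_eq_sqrt_trace, frob_eq_sqrt_trace, transpose_mul, Matrix.mul_assoc,
    ← Matrix.mul_assoc Wᵀ, hW, Matrix.one_mul]

end Frobenius

section TwoInf

variable {n k : ℕ}

lemma twoInf_nonneg_s10 (A : Matrix (Fin n) (Fin k) ℝ) : 0 ≤ twoInf A :=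
  Real.iSup_nonneg fun _ => rnorm_nonneg _

lemma rnorm_le_twoInf (A : Matrix (Fin n) (Fin k) ℝ) (i : Fin n) : rnorm (A i) ≤ twoInf A :=
  le_ciSup (f := fun i => rnorm (A i)) (Set.finite_range _).bddAbove i

lemma twoInf_smul (c : ℝ) (A : Matrix (Fin n) (Fin k) ℝ) : twoInf (c • A) = |c| * twoInf A := by
  rw [twoInf, twoInf, Real.mul_iSup_of_nonneg (abs_nonneg c)]
  exact iSup_congr fun i => rnorm_smul c (A i)

lemma twoInf_le_frob (A : Matrix (Fin n) (Fin k) ℝ) : twoInf A ≤ frob A := by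
  refine Real.iSup_le (fun i => Real.sqrt_le_sqrt ?_) (frob_nonneg A)
  exact Finset.single_le_sum (f := fun i => ∑ j, A i j ^ 2)
    (fun _ _ => Finset.sum_nonneg fun _ _ => sq_nonneg _) (Finset.mem_univ i)

lemma frob_le_sqrt_mul_twoInf (A : Matrix (Fin n) (Fin k) ℝ) : frob A ≤ √n * twoInf A := by
  rw [← Real.sqrt_sq (twoInf_nonneg_s10 A), ← Real.sqrt_mul n.cast_nonneg, frob]
  refine Real.sqrt_le_sqrt ?_
  calc ∑ i, ∑ j, A i j ^ 2 = ∑ i, rnorm (A i) ^ 2 := by simp only [rnorm_sq]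
    _ ≤ ∑ _i : Fin n, twoInf A ^ 2 := Finset.sum_le_sum fun i _ =>
        pow_le_pow_left₀ (rnorm_nonneg _) (rnorm_le_twoInf A i) 2
    _ = n * twoInf A ^ 2 := by simp

end TwoInf

section Separation

variable {l m n : ℕ} (B : Matrix (Fin l) (Fin l) ℝ) (C : Matrix (Fin m) (Fin m) ℝ)

lemma sepF_nonneg : 0 ≤ sepF B C :=
  Real.sInf_nonneg fun _ ⟨_, _, hr⟩ => hr ▸ frob_nonneg _

lemma sepF_mul_frob_le (X : Matrix (Fin m) (Fin l) ℝ) :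
    sepF B C * frob X ≤ frob (X * B - C * X) := by
  rcases (frob_nonneg X).eq_or_lt with hX | hX
  · rw [← hX, mul_zero]
    exact frob_nonneg _
  have hbdd : BddBelow {r : ℝ | ∃ X : Matrix (Fin m) (Fin l) ℝ, frob X = 1 ∧
      r = frob (X * B - C * X)} := ⟨0, fun _ ⟨_, _, hr⟩ => hr ▸ frob_nonneg _⟩
  have hunit : frob ((frob X)⁻¹ • X) = 1 := by
    rw [frob_smul, abs_of_pos (inv_pos.2 hX), inv_mul_cancel₀ hX.ne']
  have hres : (frob X)⁻¹ • X * B - C * ((frob X)⁻¹ • X) = (frob X)⁻¹ • (X * B - C * X) := by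
    rw [Matrix.smul_mul, Matrix.mul_smul, smul_sub]
  have hle : sepF B C ≤ (frob X)⁻¹ * frob (X * B - C * X) := by
    refine csInf_le hbdd ⟨_, hunit, ?_⟩
    rw [hres, frob_smul, abs_of_pos (inv_pos.2 hX)]
  rwa [← le_div_iff₀ hX, ← inv_mul_eq_div]

variable {W : Matrix (Fin n) (Fin m) ℝ}

lemma residual_eq_of_transpose_mul_self_eq_one (hW : Wᵀ * W = 1) (X : Matrix (Fin m) (Fin l) ℝ) :
    W * X * B - W * C * Wᵀ * (W * X) = W * (X * B - C * X) := by
  rw [Matrix.mul_sub, Matrix.mul_assoc W X B, Matrix.mul_assoc (W * C), ← Matrix.mul_assoc Wᵀ, hW,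
    Matrix.one_mul, Matrix.mul_assoc]

lemma sepF_le_sqrt_mul_twoInf_residual (hW : Wᵀ * W = 1) {X : Matrix (Fin m) (Fin l) ℝ}
    (hX : twoInf (W * X) = 1) :
    sepF B C ≤ √n * twoInf (W * X * B - W * C * Wᵀ * (W * X)) := by
  have hX1 : 1 ≤ frob X := by
    rw [← hX, ← frob_mul_of_transpose_mul_self_eq_one hW X]
    exact twoInf_le_frob _
  calc sepF B C ≤ sepF B C * frob X := le_mul_of_one_le_right (sepF_nonneg B C) hX1
    _ ≤ frob (X * B - C * X) := sepF_mul_frob_le B C X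
    _ = frob (W * X * B - W * C * Wᵀ * (W * X)) := by
        rw [residual_eq_of_transpose_mul_self_eq_one B C hW,
          frob_mul_of_transpose_mul_self_eq_one hW]
    _ ≤ √n * twoInf (W * X * B - W * C * Wᵀ * (W * X)) := frob_le_sqrt_mul_twoInf _

lemma exists_twoInf_mul_eq_one (hW : Wᵀ * W = 1) {X : Matrix (Fin m) (Fin l) ℝ}
    (hX : frob X = 1) : ∃ Y : Matrix (Fin m) (Fin l) ℝ, twoInf (W * Y) = 1 := by
  have hpos : 0 < twoInf (W * X) := by
    have h := frob_le_sqrt_mul_twoInf (W * X)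
    rw [frob_mul_of_transpose_mul_self_eq_one hW, hX] at h
    exact pos_of_mul_pos_right (one_pos.trans_le h) (Real.sqrt_nonneg _)
  refine ⟨(twoInf (W * X))⁻¹ • X, ?_⟩
  rw [Matrix.mul_smul, twoInf_smul, abs_of_pos (inv_pos.2 hpos), inv_mul_cancel₀ hpos.ne']

end Separation

theorem stmt10_general {l m n : ℕ} (B : Matrix (Fin l) (Fin l) ℝ) (C : Matrix (Fin m) (Fin m) ℝ)
    (W : Matrix (Fin n) (Fin m) ℝ) (hW : Wᵀ * W = 1) :
    (1 / Real.sqrt n) *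
        sInf {r : ℝ | ∃ X : Matrix (Fin m) (Fin l) ℝ, frob X = 1 ∧
          r = frob (X * B - C * X)} ≤
      sInf {r : ℝ | ∃ X : Matrix (Fin m) (Fin l) ℝ, twoInf (W * X) = 1 ∧
          r = twoInf (W * X * B - W * C * Wᵀ * (W * X))} := by
  change 1 / √n * sepF B C ≤ sepTwoInfOn W B (W * C * Wᵀ)
  by_cases hF : ∃ X : Matrix (Fin m) (Fin l) ℝ, frob X = 1
  swap
  · have hempty : sepF B C = 0 := by
      rw [sepF, ← Real.sInf_empty]
      congr
      exact Set.eq_empty_of_forall_notMem fun _ ⟨X, hX, _⟩ => hF ⟨X, hX⟩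
    rw [hempty, mul_zero]
    exact Real.sInf_nonneg fun _ ⟨_, _, hr⟩ => hr ▸ twoInf_nonneg_s10 _
  obtain ⟨X₀, hX₀⟩ := hF
  obtain ⟨Y, hY⟩ := exists_twoInf_mul_eq_one hW hX₀
  refine le_csInf ⟨_, Y, hY, rfl⟩ ?_
  rintro _ ⟨X, hX, rfl⟩
  rw [one_div_mul_eq_div]
  exact div_le_of_le_mul₀ (Real.sqrt_nonneg _) (twoInf_nonneg_s10 _)
    (by rw [mul_comm]; exact sepF_le_sqrt_mul_twoInf_residual B C hW hX)

theorem stmt10 {l m n : ℕ} (B : Matrix (Fin l) (Fin l) ℝ) (C : Matrix (Fin m) (Fin m) ℝ)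
    (W : Matrix (Fin n) (Fin m) ℝ) (hmn : m ≤ n) (hW : Wᵀ * W = 1) :
    (1 / Real.sqrt n) *
        sInf {r : ℝ | ∃ X : Matrix (Fin m) (Fin l) ℝ, frob X = 1 ∧
          r = frob (X * B - C * X)} ≤
      sInf {r : ℝ | ∃ X : Matrix (Fin m) (Fin l) ℝ, twoInf (W * X) = 1 ∧
          r = twoInf (W * X * B - W * C * Wᵀ * (W * X))} :=
  stmt10_general B C W hW
end

section
/- Let V₁ ∈ ℝ^{n×r} and V₂ ∈ ℝ^{n×(n−r)} have orthonormal columns with V₁^T V₂ = 0, let Λ₁, Λ₂ be diagonal, let A = V₁Λ₁V₁^T + V₂Λ₂V₂^T, let E be symmetric, and let Â = A + E. Suppose X̂ ∈ ℝ^{(n−r)×r} satisfies 0 = −Â₂₁ + X̂Â₁₁ − Â₂₂X̂ + X̂Â₁₂X̂ where Âᵢⱼ = Vᵢ^T Â Vⱼ. Define V̂₁ = (V₁ + V₂X̂)(I + X̂^TX̂)^{−1/2}. Then V̂₁^T Â V̂₁ is similar to Â₁₁ + Â₁₂X̂, i.e., V̂₁^T Â V̂₁ = (I + X̂^TX̂)^{1/2}(Â₁₁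 + Â₁₂X̂)(I + X̂^TX̂)^{−1/2}. -/
/-!
Substituting `Â₂₁` from the Riccati equation into the expansion of `(V₁ + V₂X̂)ᵀ Â (V₁ + V₂X̂)`
gives `(I + X̂ᵀX̂)(Â₁₁ + Â₁₂X̂) = S² (Â₁₁ + Â₁₂X̂)` with `S = (I + X̂ᵀX̂)^{1/2}`; conjugating by the
symmetric matrix `S⁻¹` turns this into the claimed similarity.
-/

open Matrix

/-- the old `Matrix.PosSemidef.sqrt` (removed from Mathlib), with its old definition -/
noncomputable def posSemidefSqrt {m : Type*} [Fintype m] [DecidableEq m] {A : Matrix m m ℝ}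
    (hA : A.PosSemidef) : Matrix m m ℝ :=
  hA.1.eigenvectorUnitary.1 * diagonal ((↑) ∘ (√·) ∘ hA.1.eigenvalues) *
    (star hA.1.eigenvectorUnitary : Matrix m m ℝ)

theorem posSemidefSqrt_mul_self {m : Type*} [Fintype m] [DecidableEq m] {A : Matrix m m ℝ}
    (hA : A.PosSemidef) : posSemidefSqrt hA * posSemidefSqrt hA = A := by
  unfold posSemidefSqrt
  conv_rhs => rw [hA.1.spectral_theorem, Unitary.conjStarAlgAut_apply]
  set U : Matrix m m ℝ := hA.1.eigenvectorUnitary.1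
  set D : Matrix m m ℝ := diagonal ((↑) ∘ (√·) ∘ hA.1.eigenvalues)
  have hU : star U * U = 1 := Unitary.coe_star_mul_self _
  have hD : D * D = diagonal (RCLike.ofReal ∘ hA.1.eigenvalues : m → ℝ) := by
    rw [diagonal_mul_diagonal]
    congr 1
    funext i
    simp [Real.mul_self_sqrt (hA.eigenvalues_nonneg i)]
  calc U * D * star U * (U * D * star U) = U * D * (star U * U) * D * star U := by
        simp only [Matrix.mul_assoc]
    _ = U * diagonal (RCLike.ofReal ∘ hA.1.eigenvalues) * star U := by
        rw [hU, Matrix.mul_one, Matrix.mul_assoc U D D, hD]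

theorem posSemidefSqrt_transpose {m : Type*} [Fintype m] [DecidableEq m] {A : Matrix m m ℝ}
    (hA : A.PosSemidef) : (posSemidefSqrt hA)ᵀ = posSemidefSqrt hA := by
  simp only [posSemidefSqrt, star_eq_conjTranspose,
    conjTranspose_eq_transpose_of_trivial, transpose_mul, transpose_transpose, diagonal_transpose,
    Matrix.mul_assoc]

theorem Matrix.PosDef.isUnit_det_posSemidefSqrt {m : Type*} [Fintype m] [DecidableEq m]
    {A : Matrix m m ℝ} (hA : A.PosDef) : IsUnit (posSemidefSqrt hA.posSemidef).det := by
  have h : IsUnit (posSemidefSqrt hA.posSemidef * posSemidefSqrt hA.posSemidef).det := by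
    rw [posSemidefSqrt_mul_self]
    exact hA.isUnit.map detMonoidHom
  rw [det_mul] at h
  exact isUnit_of_mul_isUnit_left h

section

variable {R m a b : Type*} [CommRing R] [Fintype m] [Fintype a] [Fintype b] [DecidableEq a]

theorem transpose_mul_mul_graph_of_riccati (V₁ : Matrix m a R) (V₂ : Matrix m b R)
    (A : Matrix m m R) (X : Matrix b a R)
    (hX : 0 = -(V₂ᵀ * A * V₁) + X * (V₁ᵀ * A * V₁) - (V₂ᵀ * A * V₂) * X +
        X * (V₁ᵀ * A * V₂) * X) :
    (V₁ + V₂ * X)ᵀ * A * (V₁ + V₂ * X) = (1 + Xᵀ * X) * (V₁ᵀ * A * V₁ + V₁ᵀ * A * V₂ * X) := by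
  have hA₂₁ : V₂ᵀ * A * V₁ =
      X * (V₁ᵀ * A * V₁) - (V₂ᵀ * A * V₂) * X + X * (V₁ᵀ * A * V₂) * X := by
    linear_combination (norm := noncomm_ring) hX
  calc (V₁ + V₂ * X)ᵀ * A * (V₁ + V₂ * X)
      = V₁ᵀ * A * V₁ + V₁ᵀ * A * V₂ * X + Xᵀ * (V₂ᵀ * A * V₁) + Xᵀ * (V₂ᵀ * A * V₂) * X := by
        simp only [transpose_add, transpose_mul, Matrix.add_mul, Matrix.mul_add, Matrix.mul_assoc]
        abel
    _ = (1 + Xᵀ * X) * (V₁ᵀ * A * V₁ + V₁ᵀ * A * V₂ * X) := by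
        rw [hA₂₁]
        simp only [Matrix.add_mul, Matrix.mul_add, Matrix.mul_sub, Matrix.one_mul, Matrix.mul_assoc]
        abel

theorem transpose_mul_mul_inv_eq_of_mul_self {n : Type*} [Fintype n]
    {A : Matrix n n R} {W : Matrix n a R} {S B : Matrix a a R} (hSt : Sᵀ = S) (hS : IsUnit S.det)
    (hW : Wᵀ * A * W = S * S * B) : (W * S⁻¹)ᵀ * A * (W * S⁻¹) = S * B * S⁻¹ := by
  calc (W * S⁻¹)ᵀ * A * (W * S⁻¹) = S⁻¹ * (Wᵀ * A * W) * S⁻¹ := by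
        simp only [transpose_mul, transpose_nonsing_inv, hSt, Matrix.mul_assoc]
    _ = S * B * S⁻¹ := by
        rw [hW, ← Matrix.mul_assoc, ← Matrix.mul_assoc, nonsing_inv_mul S hS, Matrix.one_mul]

end

theorem stmt19_general {n r : ℕ} (V₁ : Matrix (Fin n) (Fin r) ℝ) (V₂ : Matrix (Fin n) (Fin (n - r)) ℝ)
    (Ah : Matrix (Fin n) (Fin n) ℝ)
    (X : Matrix (Fin (n - r)) (Fin r) ℝ)
    (hX : 0 = -(V₂ᵀ * Ah * V₁) + X * (V₁ᵀ * Ah * V₁) - (V₂ᵀ * Ah * V₂) * X +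
        X * (V₁ᵀ * Ah * V₂) * X)
    (S : Matrix (Fin r) (Fin r) ℝ)
    (hS : S = posSemidefSqrt (Matrix.PosSemidef.add Matrix.PosSemidef.one
        (Matrix.posSemidef_conjTranspose_mul_self X))) :
    ((V₁ + V₂ * X) * S⁻¹)ᵀ * Ah * ((V₁ + V₂ * X) * S⁻¹) =
      S * (V₁ᵀ * Ah * V₁ + V₁ᵀ * Ah * V₂ * X) * S⁻¹ := by
  have hPD : (1 + Xᴴ * X).PosDef :=
    PosDef.one.add_posSemidef (posSemidef_conjTranspose_mul_self X)
  subst hS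
  refine transpose_mul_mul_inv_eq_of_mul_self (posSemidefSqrt_transpose _)
    hPD.isUnit_det_posSemidefSqrt ?_
  rw [posSemidefSqrt_mul_self, conjTranspose_eq_transpose_of_trivial]
  exact transpose_mul_mul_graph_of_riccati V₁ V₂ Ah X hX

theorem stmt19 {n r : ℕ} (V₁ : Matrix (Fin n) (Fin r) ℝ) (V₂ : Matrix (Fin n) (Fin (n - r)) ℝ)
    (hV₁ : V₁ᵀ * V₁ = 1) (hV₂ : V₂ᵀ * V₂ = 1) (hV₁₂ : V₁ᵀ * V₂ = 0)
    (Λ₁ : Matrix (Fin r) (Fin r) ℝ) (Λ₂ : Matrix (Fin (n - r)) (Fin (n - r)) ℝ)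
    (hΛ₁ : Λ₁.IsDiag) (hΛ₂ : Λ₂.IsDiag)
    (E : Matrix (Fin n) (Fin n) ℝ) (hE : Eᵀ = E)
    (Ah : Matrix (Fin n) (Fin n) ℝ) (hAh : Ah = V₁ * Λ₁ * V₁ᵀ + V₂ * Λ₂ * V₂ᵀ + E)
    (X : Matrix (Fin (n - r)) (Fin r) ℝ)
    (hX : 0 = -(V₂ᵀ * Ah * V₁) + X * (V₁ᵀ * Ah * V₁) - (V₂ᵀ * Ah * V₂) * X +
        X * (V₁ᵀ * Ah * V₂) * X)
    (S : Matrix (Fin r) (Fin r) ℝ)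
    (hS : S = posSemidefSqrt (Matrix.PosSemidef.add Matrix.PosSemidef.one
        (Matrix.posSemidef_conjTranspose_mul_self X))) :
    ((V₁ + V₂ * X) * S⁻¹)ᵀ * Ah * ((V₁ + V₂ * X) * S⁻¹) =
      S * (V₁ᵀ * Ah * V₁ + V₁ᵀ * Ah * V₂ * X) * S⁻¹ :=
  stmt19_general V₁ V₂ Ah X hX S hS
end
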